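/- Let Φ : ℝ³ → ℝ be a continuous compactly supported amplitude with Φ(0,0,0) ≠ 0, and for λ > 0 define the oscillatory integral operator T_λ f(u,v) = ∫_ℝ exp(i·λ·(u·t² + v²·t))·Φ(u,v,t)·f(t) dt. Then there exists a constant C_Φ > 0 such that for all λ ≥ 1, the operator norm of T_λ from L²(ℝ) to L²(ℝ²) satisfies ‖T_λ‖ ≥ C_Φ·λ^(-3/8). -/

import Mathlib

/-!
Test `T_λ` against `f = ℓ⁻¹ · 𝟙_{[0, ℓ²]}` with `ℓ = b λ^{-1/4}`, which has unit `L²` norm. For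
`(u, v) ∈ [0, b] × [0, ℓ]` and `t ∈ [0, ℓ²]` the phase is at most `2 λ ℓ⁴ = 2 b⁴`, so for small `b`
the integrand stays within `|Φ(0)|/2` of `Φ(0)`, and `|T_λ f(u, v)| ≥ |Φ(0)| ℓ / 2` on a rectangle
of area `b ℓ`. Hence `‖T_λ f‖₂ ≥ |Φ(0)| ℓ^{3/2} b^{1/2} / 2 = |Φ(0)| b² λ^{-3/8} / 2`.
-/

open MeasureTheory Set Complex
open scoped ENNReal

theorem sub_mul_measureReal_le_norm_setIntegral {α E : Type*} [MeasurableSpace α]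
    [NormedAddCommGroup E] [NormedSpace ℝ E] [CompleteSpace E] {μ : Measure α} {s : Set α}
    {g : α → E} {c : E} {ε : ℝ} (hs : μ s < ∞) (hg : IntegrableOn g s μ)
    (hgc : ∀ x ∈ s, ‖g x - c‖ ≤ ε) :
    (‖c‖ - ε) * μ.real s ≤ ‖∫ x in s, g x ∂μ‖ := by
  have hsplit : ∫ x in s, g x ∂μ = μ.real s • c + ∫ x in s, (g x - c) ∂μ := by
    rw [integral_sub hg (integrableOn_const hs.ne), setIntegral_const]
    abel
  have herr := norm_setIntegral_le_of_norm_le_const hs hgc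
  have hmain := norm_sub_norm_le (μ.real s • c) (-∫ x in s, (g x - c) ∂μ)
  rw [sub_neg_eq_add, ← hsplit, norm_neg, norm_smul,
    Real.norm_of_nonneg measureReal_nonneg] at hmain
  linarith

theorem ofReal_mul_measure_rpow_le_eLpNorm {α E : Type*} [MeasurableSpace α]
    [NormedAddCommGroup E] {μ : Measure α} {F : α → E} {s : Set α} (hs : MeasurableSet s)
    {m : ℝ} (hF : ∀ x ∈ s, m ≤ ‖F x‖) {p : ℝ≥0∞} (hp0 : p ≠ 0) (hp : p ≠ ∞) :
    ENNReal.ofReal m * μ s ^ (1 / p.toReal) ≤ eLpNorm F p μ := by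
  rcases le_or_gt m 0 with hm | hm
  · simp [ENNReal.ofReal_of_nonpos hm]
  have hle : ∀ x, ‖s.indicator (fun _ => m) x‖ ≤ ‖F x‖ := by
    intro x
    by_cases hx : x ∈ s
    · simpa [hx, abs_of_pos hm] using hF x hx
    · simp [hx]
  calc ENNReal.ofReal m * μ s ^ (1 / p.toReal)
      = eLpNorm (s.indicator fun _ => m) p μ := by
        rw [eLpNorm_indicator_const hs hp0 hp, Real.enorm_of_nonneg hm.le]
    _ ≤ eLpNorm F p μ := eLpNorm_mono hle

theorem ENNReal.ofReal_rpow_one_div_two {x : ℝ} (hx : 0 ≤ x) :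
    ENNReal.ofReal x ^ (1 / (2 : ℝ≥0∞).toReal) = ENNReal.ofReal √x := by
  conv_lhs => rw [← Real.sq_sqrt hx]
  rw [ENNReal.ofReal_pow (Real.sqrt_nonneg x), ← ENNReal.rpow_natCast, ← ENNReal.rpow_mul]
  norm_num

theorem ContinuousAt.exists_pos_forall_dist_le {X Y : Type*} [PseudoMetricSpace X]
    [PseudoMetricSpace Y] {f : X → Y} {x : X} (hf : ContinuousAt f x) {ε B : ℝ}
    (hε : 0 < ε) (hB : 0 < B) : ∃ b ∈ Ioc 0 B, ∀ y, dist y x ≤ b → dist (f y) (f x) ≤ ε := by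
  obtain ⟨δ, hδ, hfδ⟩ := Metric.continuousAt_iff.1 hf ε hε
  refine ⟨min (δ / 2) B, ⟨by positivity, min_le_right _ _⟩, fun y hy => ?_⟩
  exact (hfδ (by linarith [min_le_left (δ / 2) B])).le

theorem norm_exp_I_mul_ofReal_mul_sub_le (θ : ℝ) (z c : ℂ) :
    ‖exp (I * θ) * z - c‖ ≤ |θ| * ‖z‖ + ‖z - c‖ := by
  calc ‖exp (I * θ) * z - c‖ = ‖(exp (I * θ) - 1) * z + (z - c)‖ := by ring_nf
    _ ≤ ‖exp (I * θ) - 1‖ * ‖z‖ + ‖z - c‖ := (norm_add_le _ _).trans_eq (by rw [norm_mul])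
    _ ≤ |θ| * ‖z‖ + ‖z - c‖ := by
        gcongr
        exact Real.norm_exp_I_mul_ofReal_sub_one_le

theorem abs_cubicPhase_le {lam u v t ℓ : ℝ} (hlam : 0 ≤ lam) (hu : |u| ≤ 1) (hv : |v| ≤ ℓ)
    (ht : |t| ≤ ℓ ^ 2) : |lam * (u * t ^ 2 + v ^ 2 * t)| ≤ 2 * lam * ℓ ^ 4 := by
  have hℓ : 0 ≤ ℓ := (abs_nonneg v).trans hv
  have hut : |u * t ^ 2| ≤ ℓ ^ 4 := by
    rw [abs_mul, abs_pow]
    calc |u| * |t| ^ 2 ≤ 1 * (ℓ ^ 2) ^ 2 := by gcongr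
      _ = ℓ ^ 4 := by ring
  have hvt : |v ^ 2 * t| ≤ ℓ ^ 4 := by
    rw [abs_mul, abs_pow]
    calc |v| ^ 2 * |t| ≤ ℓ ^ 2 * ℓ ^ 2 := by gcongr
      _ = ℓ ^ 4 := by ring
  rw [abs_mul, abs_of_nonneg hlam]
  nlinarith [abs_add_le (u * t ^ 2) (v ^ 2 * t)]

noncomputable def oscillatoryOp (Φ : ℝ × ℝ × ℝ → ℝ) (lam : ℝ) (f : ℝ → ℂ) (p : ℝ × ℝ) : ℂ :=
  ∫ t : ℝ, Complex.exp (Complex.I * (lam * (p.1 * t ^ 2 + p.2 ^ 2 * t))) *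
    (Φ (p.1, p.2, t) : ℂ) * f t

noncomputable def normalizedIndicator (ℓ : ℝ) : ℝ → ℂ :=
  (Icc 0 (ℓ ^ 2)).indicator fun _ => ((ℓ⁻¹ : ℝ) : ℂ)

theorem memLp_normalizedIndicator (ℓ : ℝ) : MemLp (normalizedIndicator ℓ) 2 volume :=
  memLp_indicator_const 2 measurableSet_Icc _ (Or.inr (by simp [Real.volume_Icc]))

theorem eLpNorm_normalizedIndicator {ℓ : ℝ} (hℓ : 0 < ℓ) :
    eLpNorm (normalizedIndicator ℓ) 2 volume = 1 := by
  rw [normalizedIndicator, eLpNorm_indicator_const measurableSet_Icc two_ne_zero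
    ENNReal.ofNat_ne_top, Real.volume_Icc, sub_zero, ENNReal.ofReal_rpow_one_div_two (sq_nonneg ℓ),
    Real.sqrt_sq hℓ.le,
    ← _root_.ofReal_norm, norm_real, Real.norm_of_nonneg (inv_nonneg.2 hℓ.le),
    ← ENNReal.ofReal_mul (inv_nonneg.2 hℓ.le),
    inv_mul_cancel₀ hℓ.ne', ENNReal.ofReal_one]

theorem norm_exp_cubicPhase_mul_sub_le {Φ : ℝ × ℝ × ℝ → ℝ} {b ℓ lam u v t : ℝ}
    (hΦb : ∀ q, dist q 0 ≤ b → dist (Φ q) (Φ 0) ≤ |Φ 0| / 4)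
    (hℓb : ℓ ≤ b) (hb : b ≤ 1) (hlam : 0 ≤ lam) (hlamℓ : lam * ℓ ^ 4 ≤ 1 / 16)
    (hu : u ∈ Icc 0 b) (hv : v ∈ Icc 0 ℓ) (ht : t ∈ Icc 0 (ℓ ^ 2)) :
    ‖exp (I * (lam * (u * t ^ 2 + v ^ 2 * t))) * (Φ (u, v, t) : ℂ) - Φ 0‖ ≤ |Φ 0| / 2 := by
  obtain ⟨hu0, hub⟩ := hu
  obtain ⟨hv0, hvℓ⟩ := hv
  obtain ⟨ht0, htℓ⟩ := ht
  have hℓ2 : ℓ ^ 2 ≤ b := by nlinarith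
  have hq : dist ((u, v, t) : ℝ × ℝ × ℝ) 0 ≤ b := by
    simp only [dist_zero_right, norm_prod_le_iff, Real.norm_eq_abs, abs_of_nonneg, hu0, hv0, ht0]
    exact ⟨hub, by linarith, by linarith⟩
  have hΦq := hΦb _ hq
  rw [Real.dist_eq] at hΦq
  have hphase := abs_cubicPhase_le hlam (by rw [abs_of_nonneg hu0]; linarith)
    (abs_of_nonneg hv0 ▸ hvℓ) (abs_of_nonneg ht0 ▸ htℓ)
  have hΦq_abs : |Φ (u, v, t)| ≤ 5 / 4 * |Φ 0| := by
    linarith [abs_sub_abs_le_abs_sub (Φ (u, v, t)) (Φ 0)]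
  calc ‖exp (I * (lam * (u * t ^ 2 + v ^ 2 * t))) * (Φ (u, v, t) : ℂ) - Φ 0‖
      = ‖exp (I * ((lam * (u * t ^ 2 + v ^ 2 * t) : ℝ) : ℂ)) * (Φ (u, v, t) : ℂ) - Φ 0‖ := by
        push_cast; ring_nf
    _ ≤ |lam * (u * t ^ 2 + v ^ 2 * t)| * |Φ (u, v, t)| + |Φ (u, v, t) - Φ 0| := by
        simpa only [← ofReal_sub, norm_real, Real.norm_eq_abs]
          using norm_exp_I_mul_ofReal_mul_sub_le _ (Φ (u, v, t)) (Φ 0)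
    _ ≤ |Φ 0| / 2 := by nlinarith [abs_nonneg (Φ 0), abs_nonneg (Φ (u, v, t))]

theorem norm_oscillatoryOp_normalizedIndicator_ge {Φ : ℝ × ℝ × ℝ → ℝ} (hΦ : Continuous Φ)
    {b ℓ lam : ℝ} (hΦb : ∀ q, dist q 0 ≤ b → dist (Φ q) (Φ 0) ≤ |Φ 0| / 4)
    (hℓ : 0 < ℓ) (hℓb : ℓ ≤ b) (hb : b ≤ 1) (hlam : 0 ≤ lam) (hlamℓ : lam * ℓ ^ 4 ≤ 1 / 16)
    {p : ℝ × ℝ} (hp : p ∈ Icc 0 b ×ˢ Icc 0 ℓ) :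
    |Φ 0| / 2 * ℓ ≤ ‖oscillatoryOp Φ lam (normalizedIndicator ℓ) p‖ := by
  obtain ⟨u, v⟩ := p
  set K : ℝ → ℂ := fun t => exp (I * (lam * (u * t ^ 2 + v ^ 2 * t))) * (Φ (u, v, t) : ℂ)
  have hT : oscillatoryOp Φ lam (normalizedIndicator ℓ) (u, v) =
      (∫ t in Icc 0 (ℓ ^ 2), K t) * ((ℓ⁻¹ : ℝ) : ℂ) := by
    change ∫ t, K t * normalizedIndicator ℓ t = _
    simp_rw [normalizedIndicator, ← Set.indicator_mul_right _ K]
    rw [integral_indicator measurableSet_Icc, integral_mul_const]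
  have hint := sub_mul_measureReal_le_norm_setIntegral (measure_Icc_lt_top (μ := volume))
    (Continuous.integrableOn_Icc (f := K) (by fun_prop))
    (fun t ht => norm_exp_cubicPhase_mul_sub_le hΦb hℓb hb hlam hlamℓ hp.1 hp.2 ht)
  rw [norm_real, Real.norm_eq_abs, Real.volume_real_Icc_of_le (sq_nonneg ℓ), sub_zero] at hint
  rw [hT, norm_mul, norm_real, Real.norm_of_nonneg (inv_nonneg.2 hℓ.le), le_mul_inv_iff₀ hℓ]
  linarith

theorem eLpNorm_oscillatoryOp_normalizedIndicator_ge {Φ : ℝ × ℝ × ℝ → ℝ} (hΦ : Continuous Φ)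
    {b ℓ lam : ℝ} (hΦb : ∀ q, dist q 0 ≤ b → dist (Φ q) (Φ 0) ≤ |Φ 0| / 4)
    (hℓ : 0 < ℓ) (hℓb : ℓ ≤ b) (hb : b ≤ 1) (hlam : 0 ≤ lam) (hlamℓ : lam * ℓ ^ 4 ≤ 1 / 16) :
    ENNReal.ofReal (|Φ 0| / 2 * ℓ * √(b * ℓ)) ≤
      eLpNorm (oscillatoryOp Φ lam (normalizedIndicator ℓ)) 2 volume := by
  have hvol : volume (Icc (0:ℝ) b ×ˢ Icc 0 ℓ) ^ (1 / (2 : ℝ≥0∞).toReal) =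
      ENNReal.ofReal √(b * ℓ) := by
    rw [Measure.volume_eq_prod, Measure.prod_prod, Real.volume_Icc, Real.volume_Icc, sub_zero,
      sub_zero, ← ENNReal.ofReal_mul (hℓ.le.trans hℓb), ENNReal.ofReal_rpow_one_div_two
        (mul_nonneg (hℓ.le.trans hℓb) hℓ.le)]
  calc ENNReal.ofReal (|Φ 0| / 2 * ℓ * √(b * ℓ))
      = ENNReal.ofReal (|Φ 0| / 2 * ℓ) *
          volume (Icc (0:ℝ) b ×ˢ Icc 0 ℓ) ^ (1 / (2 : ℝ≥0∞).toReal) := by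
        rw [hvol, ENNReal.ofReal_mul (by positivity)]
    _ ≤ _ := ofReal_mul_measure_rpow_le_eLpNorm (measurableSet_Icc.prod measurableSet_Icc)
        (fun _ hp => norm_oscillatoryOp_normalizedIndicator_ge hΦ hΦb hℓ hℓb hb hlam hlamℓ hp)
        two_ne_zero ENNReal.ofNat_ne_top

theorem stmt_7_general (Φ : ℝ × ℝ × ℝ → ℝ) (hΦcont : Continuous Φ)
    (hΦ0 : Φ (0, 0, 0) ≠ 0) :
    ∃ C > 0, ∀ lam : ℝ, 1 ≤ lam → ∃ f : ℝ → ℂ, MemLp f 2 (volume : Measure ℝ) ∧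
      eLpNorm f 2 volume ≤ 1 ∧
      eLpNorm (fun p : ℝ × ℝ =>
          ∫ t : ℝ, Complex.exp (Complex.I * (lam * (p.1 * t ^ 2 + p.2 ^ 2 * t))) *
            (Φ (p.1, p.2, t) : ℂ) * f t) 2 volume ≥
        ENNReal.ofReal (C * lam ^ (-(3:ℝ)/8)) := by
  obtain ⟨b, ⟨hb0, hb⟩, hΦb⟩ := hΦcont.continuousAt.exists_pos_forall_dist_le
    (x := 0) (div_pos (abs_pos.2 hΦ0) four_pos) one_half_pos
  refine ⟨|Φ 0| / 2 * b ^ 2, by positivity, fun lam hlam => ?_⟩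
  have hlam0 : 0 < lam := one_pos.trans_le hlam
  set r := lam ^ (-(1:ℝ) / 8)
  have hr : 0 < r := Real.rpow_pos_of_pos hlam0 _
  have hr8 : lam * r ^ 8 = 1 := by
    rw [← Real.rpow_mul_natCast hlam0.le]; norm_num [Real.rpow_neg_one, hlam0.ne']
  have hr3 : lam ^ (-(3:ℝ) / 8) = r ^ 3 := by
    rw [← Real.rpow_mul_natCast hlam0.le]; norm_num
  have hℓb : b * r ^ 2 ≤ b := mul_le_of_le_one_right hb0.le
    (pow_le_one₀ hr.le (Real.rpow_le_one_of_one_le_of_nonpos hlam (by norm_num)))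
  have hlamℓ : lam * (b * r ^ 2) ^ 4 ≤ 1 / 16 := by
    have : b ^ 4 ≤ (1 / 2) ^ 4 := by gcongr
    calc lam * (b * r ^ 2) ^ 4 = b ^ 4 * (lam * r ^ 8) := by ring
      _ ≤ 1 / 16 := by rw [hr8]; linarith
  refine ⟨normalizedIndicator (b * r ^ 2), memLp_normalizedIndicator _,
    (eLpNorm_normalizedIndicator (by positivity)).le, le_of_eq_of_le ?_
    (eLpNorm_oscillatoryOp_normalizedIndicator_ge hΦcont hΦb
      (by positivity) hℓb (by linarith) hlam0.le hlamℓ)⟩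
  rw [show b * (b * r ^ 2) = (b * r) ^ 2 by ring, Real.sqrt_sq (by positivity), hr3]
  ring_nf

theorem stmt_7 (Φ : ℝ × ℝ × ℝ → ℝ) (hΦcont : Continuous Φ)
    (hΦsupp : HasCompactSupport Φ) (hΦ0 : Φ (0, 0, 0) ≠ 0) :
    ∃ C > 0, ∀ lam : ℝ, 1 ≤ lam → ∃ f : ℝ → ℂ, MemLp f 2 (volume : Measure ℝ) ∧
      eLpNorm f 2 volume ≤ 1 ∧
      eLpNorm (fun p : ℝ × ℝ =>
          ∫ t : ℝ, Complex.exp (Complex.I * (lam * (p.1 * t ^ 2 + p.2 ^ 2 * t))) *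
            (Φ (p.1, p.2, t) : ℂ) * f t) 2 volume ≥
        ENNReal.ofReal (C * lam ^ (-(3:ℝ)/8)) :=
  stmt_7_general Φ hΦcont hΦ0
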